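/- Suppose a non-boundary vertex v of a connected permutation graph is adjacent to exactly one layer on the bottom boundary and one layer on the top boundary, with the bottom layer number smaller than the top layer number. Then Blast(v) is the last point (maximal in boundary order) of its layer. -/

import Mathlib

/-- `inTL p q` : point `p` lies in the top-left quadrant of point `q`. -/
def inTL (p q : ℝ × ℝ) : Prop := p.1 < q.1 ∧ q.2 < p.2

/-- The permutation graph of a point set `S`: two points are adjacent iff both belong
to `S` and one lies in the top-left quadrant of the other. -/
def pGraph (S : Finset (ℝ × ℝ)) : SimpleGraph (ℝ × ℝ) where
  Adj p q := p ∈ S ∧ q ∈ S ∧ (inTL p q ∨ inTL q p)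
  symm := ⟨by rintro p q ⟨hp, hq, h⟩; exact ⟨hq, hp, h.symm⟩⟩
  loopless := ⟨by rintro p ⟨-, -, ⟨h, _⟩ | ⟨h, _⟩⟩ <;> exact lt_irrefl _ h⟩

/-- `p` is on the top boundary of `S`: its top-left quadrant contains no point of `S`. -/
def onTop (S : Finset (ℝ × ℝ)) (p : ℝ × ℝ) : Prop := ∀ q ∈ S, ¬ inTL q p

/-- `p` is on the bottom boundary of `S`: its bottom-right quadrant contains no point of `S`. -/
def onBottom (S : Finset (ℝ × ℝ)) (p : ℝ × ℝ) : Prop := ∀ q ∈ S, ¬ inTL p q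

/-- All points of `S` have pairwise distinct x-coordinates and pairwise distinct
y-coordinates. -/
def DistinctCoords (S : Finset (ℝ × ℝ)) : Prop :=
  ∀ p ∈ S, ∀ q ∈ S, p ≠ q → p.1 ≠ q.1 ∧ p.2 ≠ q.2

/-! Points are layered by their graph distance from the leftmost point `p₀`. Let `w` be a
bottom-boundary point of the layer `kb` of `Blast(v)` lying to its right; then `w` is
not adjacent to `v`, so it lies to the top right of `v`. A shortest path from `p₀`
reaches `w` through a point `u` of layer `kb - 1` lying to the top left of `w`. If `u` is
to the left of `v`, then `v` has a top-boundary neighbour (above-left of `u`) in a layer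
at most `kb`, not `kt`. If `u` is to the right of `v`, then `u` lies in the top-right
quadrant of `v`, and a path from `p₀` can only enter that quadrant through `v` or a
neighbour of `v`; so `v` lies in a layer below `kb`, although it has a top-boundary
neighbour in layer `kt > kb`. -/

namespace SimpleGraph

variable {V : Type*} {G : SimpleGraph V} {u v w : V}

lemma Adj.dist_le_add_one (h : G.Adj v w) (u : V) : G.dist u w ≤ G.dist u v + 1 := by
  simpa [dist_eq_one_iff_adj.mpr h] using h.reachable.dist_triangle_right u

lemma Reachable.exists_adj_dist_add_one_eq (h : G.Reachable u w) (hne : u ≠ w) :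
    ∃ v, G.Adj v w ∧ G.dist u v + 1 = G.dist u w := by
  obtain ⟨p, hp⟩ := h.exists_walk_length_eq_dist
  obtain ⟨v, hadj, q, hq⟩ := Walk.exists_eq_cons_of_ne hne.symm p.reverse
  have hlen : q.length + 1 = G.dist u w := by
    simpa [hp] using (congrArg Walk.length hq).symm
  have hle : G.dist u v ≤ q.reverse.length := dist_le _
  have hge := hadj.symm.dist_le_add_one u
  rw [Walk.length_reverse] at hle
  exact ⟨v, hadj.symm, by omega⟩

end SimpleGraph

def inBL (p q : ℝ × ℝ) : Prop := p.1 < q.1 ∧ p.2 < q.2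

lemma inBL.trans {p q r : ℝ × ℝ} (hpq : inBL p q) (hqr : inBL q r) : inBL p r :=
  ⟨hpq.1.trans hqr.1, hpq.2.trans hqr.2⟩

section PermutationGraph

variable {S : Finset (ℝ × ℝ)}

lemma pGraph_adj {p q : ℝ × ℝ} :
    (pGraph S).Adj p q ↔ p ∈ S ∧ q ∈ S ∧ (inTL p q ∨ inTL q p) :=
  Iff.rfl

lemma not_pGraph_adj_of_inBL {p q : ℝ × ℝ} (h : inBL p q) : ¬ (pGraph S).Adj p q := by
  rintro ⟨-, -, ⟨-, h'⟩ | ⟨h', -⟩⟩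
  · exact lt_asymm h.2 h'
  · exact lt_asymm h.1 h'

lemma DistinctCoords.pGraph_adj_or_inBL_or_inBL (hS : DistinctCoords S) {p q : ℝ × ℝ}
    (hp : p ∈ S) (hq : q ∈ S) (hne : p ≠ q) :
    (pGraph S).Adj p q ∨ inBL p q ∨ inBL q p := by
  obtain ⟨h1, h2⟩ := hS p hp q hq hne
  rcases h1.lt_or_gt with h1 | h1 <;> rcases h2.lt_or_gt with h2 | h2
  · exact .inr (.inl ⟨h1, h2⟩)
  · exact .inl ⟨hp, hq, .inl ⟨h1, h2⟩⟩
  · exact .inl ⟨hp, hq, .inr ⟨h1, h2⟩⟩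
  · exact .inr (.inr ⟨h1, h2⟩)

lemma exists_onTop_of_mem {u : ℝ × ℝ} (hu : u ∈ S) :
    ∃ t ∈ S, onTop S t ∧ (t = u ∨ inTL t u) := by
  classical
  obtain ⟨t, ht, htmax⟩ := Finset.exists_max_image (S.filter fun q => q = u ∨ inTL q u)
    (fun q => q.2) ⟨u, Finset.mem_filter.mpr ⟨hu, .inl rfl⟩⟩
  obtain ⟨htS, htu⟩ := Finset.mem_filter.mp ht
  refine ⟨t, htS, fun r hr hrt => ?_, htu⟩
  have hru : inTL r u := by
    rcases htu with rfl | htu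
    · exact hrt
    · exact ⟨hrt.1.trans htu.1, htu.2.trans hrt.2⟩
  exact (htmax r (Finset.mem_filter.mpr ⟨hr, .inr hru⟩)).not_gt hrt.2

lemma exists_onTop_adj_dist_le {p₀ u v : ℝ × ℝ} (hu : u ∈ S) (hv : v ∈ S)
    (huv : inTL u v) :
    ∃ t ∈ S, onTop S t ∧ (pGraph S).Adj v t ∧
      (pGraph S).dist p₀ t ≤ (pGraph S).dist p₀ u + 1 := by
  obtain ⟨t, htS, htop, rfl | htu⟩ := exists_onTop_of_mem hu
  · exact ⟨t, htS, htop, pGraph_adj.mpr ⟨hv, htS, .inr huv⟩, by omega⟩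
  · have hut : (pGraph S).Adj u t := pGraph_adj.mpr ⟨hu, htS, .inr htu⟩
    have htv : inTL t v := ⟨htu.1.trans huv.1, huv.2.trans htu.2⟩
    exact ⟨t, htS, htop, pGraph_adj.mpr ⟨hv, htS, .inr htv⟩, hut.dist_le_add_one p₀⟩

lemma exists_inTL_dist_add_one_eq_of_onBottom {p₀ w : ℝ × ℝ} (hwB : onBottom S w)
    (hreach : (pGraph S).Reachable p₀ w) (hne : p₀ ≠ w) :
    ∃ u ∈ S, inTL u w ∧ (pGraph S).dist p₀ u + 1 = (pGraph S).dist p₀ w := by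
  obtain ⟨u, huw, hdu⟩ := hreach.exists_adj_dist_add_one_eq hne
  exact ⟨u, huw.1, huw.2.2.resolve_right (hwB u huw.1), hdu⟩

/-- Every path from outside the top-right quadrant of `v` into it passes through `v` or a
neighbour of `v`, since the points bottom-left of `v` are not adjacent to that quadrant. -/
lemma DistinctCoords.dist_le_of_inBL (hS : DistinctCoords S) {p₀ v : ℝ × ℝ} (hv : v ∈ S)
    (hp₀ : ¬ inBL v p₀) {z : ℝ × ℝ} (hz : z ∈ S) (hvz : inBL v z)
    (hreach : (pGraph S).Reachable p₀ z) :
    (pGraph S).dist p₀ v ≤ (pGraph S).dist p₀ z := by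
  induction hd : (pGraph S).dist p₀ z using Nat.strong_induction_on generalizing z with
  | _ n IH =>
    have hne : p₀ ≠ z := by rintro rfl; exact hp₀ hvz
    obtain ⟨u, huz, hdu⟩ := hreach.exists_adj_dist_add_one_eq hne
    have huS : u ∈ S := huz.1
    by_cases huv : u = v
    · subst huv; omega
    rcases hS.pGraph_adj_or_inBL_or_inBL hv huS (Ne.symm huv) with hvu | hvu | huv
    · have := hvu.symm.dist_le_add_one p₀; omega
    · have := IH _ (by omega) huS hvu (hreach.trans huz.symm.reachable) rfl; omega
    · exact absurd huz (not_pGraph_adj_of_inBL (huv.trans hvz))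

end PermutationGraph

theorem stmt18_general (S : Finset (ℝ × ℝ)) (hS : DistinctCoords S)
    (hconn : ∀ p ∈ S, ∀ q ∈ S, (pGraph S).Reachable p q)
    (p₀ : ℝ × ℝ) (hp₀ : p₀ ∈ S) (hleft : ∀ q ∈ S, q ≠ p₀ → p₀.1 < q.1)
    (L : ℝ × ℝ → ℕ) (hL : ∀ w, L w = (pGraph S).dist p₀ w)
    (v : ℝ × ℝ) (hv : v ∈ S)
    (kb kt : ℕ) (hkbkt : kb < kt)
    (hbotlayer : ∀ w ∈ S, onBottom S w → (pGraph S).Adj v w → L w = kb)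
    (htoplayer : ∀ w ∈ S, onTop S w → (pGraph S).Adj v w → L w = kt)
    (htopne : ∃ w ∈ S, onTop S w ∧ (pGraph S).Adj v w)
    (bl : ℝ × ℝ)
    (hbl : bl ∈ S ∧ onBottom S bl ∧ (pGraph S).Adj v bl ∧
      ∀ q ∈ S, onBottom S q → (pGraph S).Adj v q → q.1 ≤ bl.1) :
    ∀ w ∈ S, onBottom S w → L w = L bl → w.1 ≤ bl.1 := by
  obtain ⟨hblS, hblB, hvbl, hblmax⟩ := hbl
  simp only [hL] at hbotlayer htoplayer ⊢
  have hLbl := hbotlayer bl hblS hblB hvbl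
  have hkbv : kb ≤ (pGraph S).dist p₀ v := by
    obtain ⟨t, htS, htop, hvt⟩ := htopne
    have := hvt.dist_le_add_one p₀
    have := htoplayer t htS htop hvt
    omega
  intro w hw hwB hwL
  by_contra! hblw
  have hv_bl : inTL v bl := hvbl.2.2.resolve_right (hblB v hv)
  have hvw : inBL v w := by
    rcases hS.pGraph_adj_or_inBL_or_inBL hv hw (by rintro rfl; exact hblw.not_gt hv_bl.1)
      with hvw | hvw | hwv
    · exact absurd (hblmax w hw hwB hvw) hblw.not_ge
    · exact hvw
    · exact absurd (hv_bl.1.trans hblw) hwv.1.not_gt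
  have hp₀v : ¬ inBL v p₀ := fun h =>
    (hleft v hv (by rintro rfl; exact lt_irrefl _ h.1)).not_gt h.1
  obtain ⟨u, huS, hu_w, hdu⟩ := exists_inTL_dist_add_one_eq_of_onBottom hwB
    (hconn p₀ hp₀ w hw) (by rintro rfl; exact hp₀v hvw)
  have hvu2 : v.2 < u.2 := hvw.2.trans hu_w.2
  rcases hS.pGraph_adj_or_inBL_or_inBL hv huS (by rintro rfl; exact lt_irrefl _ hvu2)
    with hvu | hvu | huv
  · obtain ⟨t, htS, htop, hvt, hdt⟩ := exists_onTop_adj_dist_le (p₀ := p₀) huS hv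
      (hvu.2.2.resolve_left fun h => h.2.not_gt hvu2)
    have := htoplayer t htS htop hvt
    omega
  · have := hS.dist_le_of_inBL hv hp₀v huS hvu (hconn p₀ hp₀ u huS)
    omega
  · exact huv.2.not_gt hvu2

/-- suppose a non-boundary vertex `v` is adjacent to boundary points of
exactly one layer `kb` on the bottom boundary and exactly one layer `kt` on the top
boundary, with `kb < kt` (the fourth layout). Then `Blast(v)`, the maximal
bottom-boundary neighbour of `v`, is the last point of its layer. -/
theorem stmt18 (S : Finset (ℝ × ℝ)) (hS : DistinctCoords S)
    (hconn : ∀ p ∈ S, ∀ q ∈ S, (pGraph S).Reachable p q)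
    (p₀ : ℝ × ℝ) (hp₀ : p₀ ∈ S) (hleft : ∀ q ∈ S, q ≠ p₀ → p₀.1 < q.1)
    (L : ℝ × ℝ → ℕ) (hL : ∀ w, L w = (pGraph S).dist p₀ w)
    (v : ℝ × ℝ) (hv : v ∈ S) (hvnb : ¬ onTop S v ∧ ¬ onBottom S v)
    (kb kt : ℕ) (hkbkt : kb < kt)
    (hbotlayer : ∀ w ∈ S, onBottom S w → (pGraph S).Adj v w → L w = kb)
    (hbotne : ∃ w ∈ S, onBottom S w ∧ (pGraph S).Adj v w)
    (htoplayer : ∀ w ∈ S, onTop S w → (pGraph S).Adj v w → L w = kt)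
    (htopne : ∃ w ∈ S, onTop S w ∧ (pGraph S).Adj v w)
    (bl : ℝ × ℝ)
    (hbl : bl ∈ S ∧ onBottom S bl ∧ (pGraph S).Adj v bl ∧
      ∀ q ∈ S, onBottom S q → (pGraph S).Adj v q → q.1 ≤ bl.1) :
    ∀ w ∈ S, onBottom S w → L w = L bl → w.1 ≤ bl.1 :=
  stmt18_general S hS hconn p₀ hp₀ hleft L hL v hv kb kt hkbkt hbotlayer htoplayer htopne bl hbl
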